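/- Let F : ℂ⁶ → ℂ² be the polynomial map F(q₁,q₂,q₃,p₁,p₂,p₃) = (p₁q₁ + p₂q₂, p₂q₂ + p₃q₃). A point s = (s₁,s₂) ∈ ℂ² is a critical value of F (i.e., s = F(x) for some x at which the derivative DF(x) is not surjective) if and only if s₁·s₂·(s₁ − s₂) = 0; in other words, the discriminant of F is the union of the three lines {s₁ = 0}, {s₂ = 0} and {s₁ = s₂}. -/

import Mathlib

/-- The involutive map `F : ℂ⁶ → ℂ²`,
`F(q₁,q₂,q₃,p₁,p₂,p₃) = (p₁q₁ + p₂q₂, p₂q₂ + p₃q₃)`; coordinates are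
`q₁ = x 0, q₂ = x 1, q₃ = x 2, p₁ = x 3, p₂ = x 4, p₃ = x 5`. -/
def pyramidalMap6 : (Fin 6 → ℂ) → (Fin 2 → ℂ) :=
  fun x => ![x 3 * x 0 + x 4 * x 1, x 4 * x 1 + x 5 * x 2]

/-!
`DF(x)` fails to be surjective iff a nonzero covector `(a, b)` kills its image, i.e.
`a • dF₁ + b • dF₂ = 0` at `x`. Writing `dF₁ = p₁dq₁ + q₁dp₁ + p₂dq₂ + q₂dp₂` and
`dF₂ = p₂dq₂ + q₂dp₂ + p₃dq₃ + q₃dp₃`, the three cases `b = 0`, `a = 0`, `a + b = 0` put `x` in one of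
three coordinate planes, and `F` maps these planes onto the lines `s₁ = 0`, `s₂ = 0`, `s₁ = s₂`.
-/

open Function

theorem LinearMap.not_surjective_iff_exists_forall_sum_mul_eq_zero {K E ι : Type*} [Field K]
    [AddCommGroup E] [Module K E] [Fintype ι] [DecidableEq ι] (T : E →ₗ[K] ι → K) :
    ¬ Surjective T ↔ ∃ c : ι → K, c ≠ 0 ∧ ∀ v, ∑ i, c i * T v i = 0 := by
  constructor
  · intro hT
    obtain ⟨f, hf, hrange⟩ := Submodule.exists_dual_map_eq_bot_of_lt_top
      (lt_top_iff_ne_top.2 (mt LinearMap.range_eq_top.1 hT)) inferInstance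
    refine ⟨fun i => f (Pi.single i 1), fun hc => hf ?_, fun v => ?_⟩
    · ext i
      simpa using congrFun hc i
    · have hfT : f (T v) = 0 := by
        rw [← Submodule.mem_bot K, ← hrange]
        exact Submodule.mem_map_of_mem (LinearMap.mem_range_self T v)
      calc ∑ i, f (Pi.single i 1) * T v i = f (T v) := by
            conv_rhs => rw [pi_eq_sum_univ' (T v)]
            simp [mul_comm]
        _ = 0 := hfT
  · rintro ⟨c, hc, hcT⟩ hT
    refine hc (funext fun j => ?_)
    obtain ⟨v, hv⟩ := hT (Pi.single j 1)
    simpa [hv, Pi.single_apply] using hcT v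

open ContinuousLinearMap in
theorem fderiv_pyramidalMap6_apply (x v : Fin 6 → ℂ) :
    fderiv ℂ pyramidalMap6 x v = ![x 3 * v 0 + x 0 * v 3 + (x 4 * v 1 + x 1 * v 4),
      x 4 * v 1 + x 1 * v 4 + (x 5 * v 2 + x 2 * v 5)] := by
  have hmul (i j : Fin 6) : HasFDerivAt (fun y : Fin 6 → ℂ => y i * y j)
      (x i • proj j + x j • proj i : (Fin 6 → ℂ) →L[ℂ] ℂ) x :=
    (hasFDerivAt_apply i x).mul (hasFDerivAt_apply j x)
  have hF : HasFDerivAt pyramidalMap6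
      (pi ![(x 3 • proj 0 + x 0 • proj 3 + (x 4 • proj 1 + x 1 • proj 4) : (Fin 6 → ℂ) →L[ℂ] ℂ),
        x 4 • proj 1 + x 1 • proj 4 + (x 5 • proj 2 + x 2 • proj 5)]) x := by
    refine hasFDerivAt_pi'.2 fun k => ?_
    fin_cases k
    exacts [(hmul 3 0).add (hmul 4 1), (hmul 4 1).add (hmul 5 2)]
  rw [hF.fderiv]
  ext k
  fin_cases k <;> simp

theorem not_surjective_fderiv_pyramidalMap6_iff (x : Fin 6 → ℂ) :
    ¬ Surjective (fderiv ℂ pyramidalMap6 x) ↔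
      (x 0 = 0 ∧ x 1 = 0 ∧ x 3 = 0 ∧ x 4 = 0) ∨ (x 1 = 0 ∧ x 2 = 0 ∧ x 4 = 0 ∧ x 5 = 0) ∨
        (x 0 = 0 ∧ x 2 = 0 ∧ x 3 = 0 ∧ x 5 = 0) := by
  rw [← ContinuousLinearMap.coe_coe, LinearMap.not_surjective_iff_exists_forall_sum_mul_eq_zero]
  simp only [ContinuousLinearMap.coe_coe, Fin.sum_univ_two, fderiv_pyramidalMap6_apply,
    Matrix.cons_val_zero, Matrix.cons_val_one]
  constructor
  · rintro ⟨c, hc0, hc⟩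
    have e0 := hc (Pi.single 0 1)
    have e1 := hc (Pi.single 1 1)
    have e2 := hc (Pi.single 2 1)
    have e3 := hc (Pi.single 3 1)
    have e4 := hc (Pi.single 4 1)
    have e5 := hc (Pi.single 5 1)
    simp [← add_mul] at e0 e1 e2 e3 e4 e5
    rcases eq_or_ne (c 0) 0 with ha | ha
    · have hb : c 1 ≠ 0 := fun hb => hc0 (funext fun i => by fin_cases i <;> assumption)
      simp_all
    · rcases eq_or_ne (c 1) 0 with hb | hb <;> simp_all
  · rintro (h | h | h)
    · exact ⟨![1, 0], by simp, fun v => by simp [h]⟩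
    · exact ⟨![0, 1], by simp, fun v => by simp [h]⟩
    · exact ⟨![1, -1], by simp, fun v => by simp [h]⟩

/-- A point `s ∈ ℂ²` is a critical value of `F(q,p) = (p₁q₁ + p₂q₂, p₂q₂ + p₃q₃)`
(the image of a point where the derivative is not surjective) if and only if
`s₁ s₂ (s₁ - s₂) = 0`: the discriminant is the union of the three lines
`{s₁ = 0} ∪ {s₂ = 0} ∪ {s₁ = s₂}`. -/
theorem discriminant_pyramidalMap6 (s : Fin 2 → ℂ) :
    (∃ x : Fin 6 → ℂ, pyramidalMap6 x = s ∧
        ¬ Function.Surjective (fderiv ℂ pyramidalMap6 x)) ↔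
      s 0 * s 1 * (s 0 - s 1) = 0 := by
  simp only [not_surjective_fderiv_pyramidalMap6_iff]
  constructor
  · rintro ⟨x, rfl, ⟨h0, h1, h3, h4⟩ | ⟨h1, h2, h4, h5⟩ | ⟨h0, h2, h3, h5⟩⟩ <;>
      simp [pyramidalMap6, *]
  · rw [mul_eq_zero, mul_eq_zero, sub_eq_zero]
    rintro ((h | h) | h)
    · refine ⟨![0, 0, s 1, 0, 0, 1], ?_, Or.inl ⟨rfl, rfl, rfl, rfl⟩⟩
      ext i; fin_cases i <;> simp [pyramidalMap6, h]
    · refine ⟨![s 0, 0, 0, 1, 0, 0], ?_, Or.inr (Or.inl ⟨rfl, rfl, rfl, rfl⟩)⟩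
      ext i; fin_cases i <;> simp [pyramidalMap6, h]
    · refine ⟨![0, s 0, 0, 0, 1, 0], ?_, Or.inr (Or.inr ⟨rfl, rfl, rfl, rfl⟩)⟩
      ext i; fin_cases i <;> simp [pyramidalMap6, h]
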